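/- arXiv:0710.3887 — 2 statements merged into one kernel-verified Lean document; each statement's English description precedes it below -/
import Mathlib

section
/- Let L be a lattice implication algebra and A an LI-ideal of L. Then A is an ultra LI-ideal of L if and only if A is a proper LI-ideal and for all x, y ∈ L, x ∉ A and y ∉ A imply (x→y)' ∈ A and (y→x)' ∈ A. -/
/-- A lattice implication algebra: a bounded lattice with an order-reversing
involution `compl` and an implication `imp` satisfying (I1)-(I5), (L1), (L2),
with the order characterized by `x ≤ y ↔ x → y = 1` (here `1 = ⊤`, `0 = ⊥`). -/
class LatticeImplicationAlgebra (L : Type*) extends Lattice L, BoundedOrder L where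
  compl : L → L
  imp : L → L → L
  compl_anti : ∀ x y : L, x ≤ y → compl y ≤ compl x
  compl_compl : ∀ x : L, compl (compl x) = x
  I1 : ∀ x y z : L, imp x (imp y z) = imp y (imp x z)
  I2 : ∀ x : L, imp x x = ⊤
  I3 : ∀ x y : L, imp x y = imp (compl y) (compl x)
  I4 : ∀ x y : L, imp x y = ⊤ → imp y x = ⊤ → x = y
  I5 : ∀ x y : L, imp (imp x y) y = imp (imp y x) x
  L1 : ∀ x y z : L, imp (x ⊔ y) z = imp x z ⊓ imp y z
  L2 : ∀ x y z : L, imp (x ⊓ y) z = imp x z ⊔ imp y z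
  le_iff_imp : ∀ x y : L, x ≤ y ↔ imp x y = ⊤

namespace LatticeImplicationAlgebra

variable {L : Type*} [LatticeImplicationAlgebra L]

/-- `A` is an LI-ideal: `0 ∈ A` and `(x→y)' ∈ A` together with `y ∈ A` imply `x ∈ A`. -/
def IsLIIdeal (A : Set L) : Prop :=
  (⊥ : L) ∈ A ∧ ∀ x y : L, compl (imp x y) ∈ A → y ∈ A → x ∈ A

end LatticeImplicationAlgebra

open LatticeImplicationAlgebra

section Aux

variable {L : Type*} [LatticeImplicationAlgebra L]

lemma lia_imp_top (x : L) : imp x (⊤ : L) = ⊤ := (le_iff_imp x ⊤).mp le_top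

lemma lia_le_imp (a z : L) : a ≤ imp z a := by
  rw [le_iff_imp, I1, I2, lia_imp_top]

lemma lia_compl_top : compl (⊤ : L) = ⊥ := by
  have h := compl_anti (compl (⊥ : L)) ⊤ le_top
  rw [LatticeImplicationAlgebra.compl_compl] at h
  exact le_bot_iff.mp h

lemma lia_mem_of_le {A : Set L} (hA : IsLIIdeal A) {a b : L}
    (hab : a ≤ b) (hb : b ∈ A) : a ∈ A := by
  refine hA.2 a b ?_ hb
  rw [(le_iff_imp a b).mp hab, lia_compl_top]
  exact hA.1

lemma lia_univ_of_mem_compl_mem {A : Set L} (hA : IsLIIdeal A) {a : L}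
    (ha : a ∈ A) (ha' : compl a ∈ A) : A = Set.univ := by
  ext z
  simp only [Set.mem_univ, iff_true]
  refine hA.2 z a ?_ ha
  exact lia_mem_of_le hA (compl_anti a (imp z a) (lia_le_imp a z)) ha'

end Aux

/-- An LI-ideal `A` of a lattice implication algebra `L` is an ultra LI-ideal
iff `A` is proper and for all `x, y ∉ A` one has `(x→y)' ∈ A` and `(y→x)' ∈ A`. -/
theorem ultra_iff_proper_obstinate {L : Type*} [LatticeImplicationAlgebra L]
    (A : Set L) (hA : IsLIIdeal A) :
    (∀ x : L, x ∈ A ↔ compl x ∉ A) ↔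
      (A ≠ Set.univ ∧ ∀ x y : L, x ∉ A → y ∉ A →
        compl (imp x y) ∈ A ∧ compl (imp y x) ∈ A) := by
  constructor
  · intro hu
    constructor
    · intro h
      have h1 : (⊤ : L) ∈ A := h ▸ Set.mem_univ _
      have h2 : compl (⊥ : L) ∉ A := (hu ⊥).mp hA.1
      have : compl (⊥ : L) = ⊤ := by
        have := lia_compl_top (L := L) ▸ LatticeImplicationAlgebra.compl_compl (⊤ : L)
        exact this
      rw [this] at h2
      exact h2 h1
    · intro x y hx hy
      have hx' : compl x ∈ A := by
        by_contra hc
        exact hx ((hu x).mpr hc)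
      have hy' : compl y ∈ A := by
        by_contra hc
        exact hy ((hu y).mpr hc)
      constructor
      · exact lia_mem_of_le hA (compl_anti y (imp x y) (lia_le_imp y x)) hy'
      · exact lia_mem_of_le hA (compl_anti x (imp y x) (lia_le_imp x y)) hx'
  · rintro ⟨hproper, hob⟩ x
    constructor
    · intro hx hx'
      exact hproper (lia_univ_of_mem_compl_mem hA hx hx')
    · intro hx'
      by_contra hx
      -- d := (x' → x)' ∈ A
      have hd : compl (imp (compl x) x) ∈ A := (hob x (compl x) hx hx').2
      -- x' → x ∉ A
      have ht : imp (compl x) x ∉ A := by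
        intro h
        exact hproper (lia_univ_of_mem_compl_mem hA h hd)
      -- ((x'→x) → x')' ∈ A
      have hkey : compl (imp (imp (compl x) x) (compl x)) ∈ A :=
        (hob (imp (compl x) x) (compl x) ht hx').1
      -- x → d = (x'→x) → x'
      have heq : imp x (compl (imp (compl x) x)) = imp (imp (compl x) x) (compl x) := by
        rw [I3 x (compl (imp (compl x) x)), LatticeImplicationAlgebra.compl_compl]
      exact hx (hA.2 x (compl (imp (compl x) x)) (heq ▸ hkey) hd)
end

section
/- Let A be an LI-ideal of an MTL-algebra L. Then A is an ultra LI-ideal of L if and only if A is both a prime proper LI-ideal and a Boolean LI-ideal of L. -/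
/-- An MTL-algebra: a residuated lattice (bounded lattice, commutative monoid
structure `tmul` with unit `⊤`, and residuum `himp` adjoint to `tmul`)
satisfying the pre-linearity equation `(x→y) ∨ (y→x) = 1`. -/
class MTLAlgebra (L : Type*) extends Lattice L, BoundedOrder L where
  tmul : L → L → L
  himp : L → L → L
  tmul_comm : ∀ x y : L, tmul x y = tmul y x
  tmul_assoc : ∀ x y z : L, tmul (tmul x y) z = tmul x (tmul y z)
  top_tmul : ∀ x : L, tmul ⊤ x = x
  adjoint : ∀ x y z : L, z ≤ himp x y ↔ tmul z x ≤ y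
  prelinearity : ∀ x y : L, himp x y ⊔ himp y x = ⊤

namespace MTLAlgebra

variable {L : Type*} [MTLAlgebra L]

/-- The negation `x' := x → 0`. -/
def neg (x : L) : L := himp x ⊥

/-- `A` is an LI-ideal of an MTL-algebra: `0 ∈ A` and `(x'→y')' ∈ A`
together with `x ∈ A` imply `y ∈ A`. -/
def IsLIIdeal (A : Set L) : Prop :=
  (⊥ : L) ∈ A ∧ ∀ x y : L, neg (himp (neg x) (neg y)) ∈ A → x ∈ A → y ∈ A

end MTLAlgebra

open MTLAlgebra

section Aux
variable {L : Type*} [MTLAlgebra L]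

lemma himp_eq_top_of_le {a b : L} (h : a ≤ b) : himp a b = ⊤ :=
  le_antisymm le_top ((adjoint a b ⊤).mpr (by rw [top_tmul]; exact h))

lemma tmul_mono_left {a b : L} (c : L) (h : a ≤ b) : tmul a c ≤ tmul b c :=
  (adjoint c (tmul b c) a).mp (le_trans h ((adjoint c (tmul b c) b).mpr le_rfl))

lemma tmul_mono_right (a : L) {b c : L} (h : b ≤ c) : tmul a b ≤ tmul a c := by
  rw [tmul_comm a b, tmul_comm a c]; exact tmul_mono_left a h

lemma tmul_le_left (a b : L) : tmul a b ≤ a := by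
  calc tmul a b ≤ tmul a ⊤ := tmul_mono_right a le_top
    _ = a := by rw [tmul_comm, top_tmul]

lemma tmul_bot_le (a : L) : tmul a ⊥ ≤ ⊥ := by
  rw [tmul_comm]; exact tmul_le_left ⊥ a

lemma tmul_neg_le_bot (a : L) : tmul (neg a) a ≤ ⊥ :=
  (adjoint a ⊥ (neg a)).mp le_rfl

lemma le_negneg (a : L) : a ≤ neg (neg a) :=
  (adjoint (neg a) ⊥ a).mpr (by rw [tmul_comm]; exact tmul_neg_le_bot a)

lemma neg_antitone {a b : L} (h : a ≤ b) : neg b ≤ neg a :=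
  (adjoint a ⊥ (neg b)).mpr (le_trans (tmul_mono_right _ h) (tmul_neg_le_bot b))

lemma neg_neg_neg (a : L) : neg (neg (neg a)) = neg a :=
  le_antisymm (neg_antitone (le_negneg a)) (le_negneg (neg a))

lemma neg_top : neg (⊤ : L) = ⊥ := by
  have h : tmul (neg (⊤:L)) ⊤ ≤ ⊥ := tmul_neg_le_bot ⊤
  rw [tmul_comm, top_tmul] at h
  exact le_antisymm h bot_le

lemma tmul_rot (a b c : L) : tmul (tmul a b) c = tmul b (tmul c a) := by
  rw [tmul_assoc, tmul_comm a (tmul b c), tmul_assoc]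

lemma himp_mono_right (a : L) {b c : L} (h : b ≤ c) : himp a b ≤ himp a c :=
  (adjoint a c _).mpr (le_trans ((adjoint a b _).mp le_rfl) h)

lemma mem_of_le {A : Set L} (hA : IsLIIdeal A) {x y : L} (h : y ≤ x) (hx : x ∈ A) : y ∈ A := by
  refine hA.2 x y ?_ hx
  rw [himp_eq_top_of_le (neg_antitone h), neg_top]
  exact hA.1

lemma negneg_mem {A : Set L} (hA : IsLIIdeal A) {x : L} (hx : x ∈ A) : neg (neg x) ∈ A := by
  refine hA.2 x _ ?_ hx
  rw [himp_eq_top_of_le (le_of_eq (neg_neg_neg x).symm), neg_top]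
  exact hA.1

lemma sup_mem {A : Set L} (hA : IsLIIdeal A) {a b : L} (ha : a ∈ A) (hb : b ∈ A) :
    a ⊔ b ∈ A := by
  refine hA.2 a (a ⊔ b) ?_ ha
  have key : neg b ≤ himp (neg a) (neg (a ⊔ b)) := by
    rw [adjoint]
    show tmul (neg b) (neg a) ≤ himp (a ⊔ b) ⊥
    rw [adjoint, tmul_comm, ← adjoint]
    refine sup_le ?_ ?_ <;> rw [adjoint]
    · calc tmul a (tmul (neg b) (neg a)) = tmul (neg b) (tmul (neg a) a) := by
            rw [← tmul_assoc, tmul_comm a (neg b), tmul_assoc, tmul_comm a (neg a)]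
        _ ≤ tmul (neg b) ⊥ := tmul_mono_right _ (tmul_neg_le_bot a)
        _ ≤ ⊥ := tmul_bot_le _
    · calc tmul b (tmul (neg b) (neg a)) = tmul (neg a) (tmul (neg b) b) := by
            rw [← tmul_assoc, tmul_comm b (neg b), tmul_comm (tmul (neg b) b) (neg a)]
        _ ≤ tmul (neg a) ⊥ := tmul_mono_right _ (tmul_neg_le_bot b)
        _ ≤ ⊥ := tmul_bot_le _
  exact mem_of_le hA (neg_antitone key) (negneg_mem hA hb)

lemma neg_inf_le (x y : L) : neg (x ⊓ y) ≤ neg x ⊔ neg y := by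
  have key : ∀ u v : L, himp u v ≤ himp (neg (u ⊓ v)) (neg u) := by
    intro u v
    rw [adjoint]
    show tmul (himp u v) (neg (u ⊓ v)) ≤ himp u ⊥
    rw [adjoint, tmul_rot]
    have huv : tmul u (himp u v) ≤ u ⊓ v :=
      le_inf (tmul_le_left u _) (by rw [tmul_comm]; exact (adjoint u v _).mp le_rfl)
    exact le_trans (tmul_mono_right _ huv) (tmul_neg_le_bot _)
  have h1 : himp x y ≤ himp (neg (x ⊓ y)) (neg x ⊔ neg y) :=
    le_trans (key x y) (himp_mono_right _ le_sup_left)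
  have h2 : himp y x ≤ himp (neg (x ⊓ y)) (neg x ⊔ neg y) := by
    rw [inf_comm]
    exact le_trans (key y x) (himp_mono_right _ le_sup_right)
  have htop : (⊤ : L) ≤ himp (neg (x ⊓ y)) (neg x ⊔ neg y) := by
    rw [← prelinearity x y]; exact sup_le h1 h2
  have := (adjoint _ _ ⊤).mp htop
  rwa [top_tmul] at this

end Aux

/-- An LI-ideal `A` of an MTL-algebra `L` is an ultra LI-ideal iff `A` is a
prime proper LI-ideal and a Boolean LI-ideal. -/
theorem ultra_iff_prime_proper_and_Boolean {L : Type*} [MTLAlgebra L] (A : Set L)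
    (hA : IsLIIdeal A) :
    (∀ x : L, x ∈ A ↔ neg x ∉ A) ↔
      ((A ≠ Set.univ ∧ ∀ x y : L, x ⊓ y ∈ A → x ∈ A ∨ y ∈ A) ∧
        (∀ x : L, x ⊓ neg x ∈ A)) := by
  constructor
  · intro hU
    refine ⟨⟨?_, ?_⟩, ?_⟩
    · intro h
      have htop : (⊤ : L) ∈ A := h ▸ Set.mem_univ ⊤
      exact (hU ⊤).mp htop (by rw [neg_top]; exact hA.1)
    · intro x y hxy
      by_contra hc
      push_neg at hc
      have hnx : neg x ∈ A := not_not.mp (fun h => hc.1 ((hU x).mpr h))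
      have hny : neg y ∈ A := not_not.mp (fun h => hc.2 ((hU y).mpr h))
      have : neg (x ⊓ y) ∈ A := mem_of_le hA (neg_inf_le x y) (sup_mem hA hnx hny)
      exact (hU (x ⊓ y)).mp hxy this
    · intro x
      by_contra h
      have hmem : neg (x ⊓ neg x) ∈ A := not_not.mp (fun h' => h ((hU _).mpr h'))
      have h1 : neg x ∈ A := mem_of_le hA (neg_antitone inf_le_left) hmem
      have h2 : neg (neg x) ∈ A := mem_of_le hA (neg_antitone inf_le_right) hmem
      exact (hU (neg x)).mp h1 h2
  · rintro ⟨⟨hproper, hprime⟩, hbool⟩ x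
    constructor
    · intro hx hnx
      have htop : (⊤ : L) ∈ A := by
        refine hA.2 (neg x) ⊤ ?_ hnx
        rw [neg_top, show himp (neg (neg x)) ⊥ = neg (neg (neg x)) from rfl, neg_neg_neg]
        exact negneg_mem hA hx
      exact hproper (Set.eq_univ_of_forall fun y => mem_of_le hA le_top htop)
    · intro hnx
      rcases hprime x (neg x) (hbool x) with h | h
      · exact h
      · exact absurd h hnx
end
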